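/- For a nonzero symmetric traceless 3×3 real matrix Q, β(Q) = -1 if and only if Q/|Q| has eigenvalues √6/6, √6/6, -√6/3 (two equal positive eigenvalues and one negative eigenvalue). -/

import Mathlib

/-!
Let `a = |Q| / √6`. The eigenvalues `λᵢ` of `Q` satisfy `∑ λᵢ = tr Q = 0` and
`∑ λᵢ² = |Q|² = 6a²`, and `β(Q) = -1` says `∑ λᵢ³ = tr Q³ = -6a³`. By Newton's identities the
`λᵢ` are then the roots of `t³ - 3a²t + 2a³ = (t - a)²(t + 2a)`, and `∑ λᵢ = 0` forces the
root `-2a` to occur exactly once.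
-/

open Matrix

namespace Matrix

theorem sum_sum_sq_eq_trace_mul_transpose {m n R : Type*} [Fintype m] [Fintype n]
    [CommSemiring R] (A : Matrix m n R) :
    ∑ i, ∑ j, A i j ^ 2 = (A * Aᵀ).trace := by
  simp [trace, mul_apply, sq]

namespace IsHermitian

variable {n : Type*} [Fintype n] [DecidableEq n]

theorem trace_pow_eq_sum_eigenvalues_pow {𝕜 : Type*} [RCLike 𝕜] {A : Matrix n n 𝕜}
    (hA : A.IsHermitian) (k : ℕ) : (A ^ k).trace = ∑ i, (hA.eigenvalues i : 𝕜) ^ k := by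
  conv_lhs => rw [hA.spectral_theorem, ← map_pow, Unitary.conjStarAlgAut_apply, trace_mul_cycle,
    Unitary.coe_star_mul_self, one_mul, diagonal_pow, trace_diagonal]
  rfl

theorem sum_sum_sq_eq_sum_eigenvalues_sq {A : Matrix n n ℝ} (hA : A.IsHermitian) :
    ∑ i, ∑ j, A i j ^ 2 = ∑ i, hA.eigenvalues i ^ 2 := by
  have hT : Aᵀ = A := by simpa [conjTranspose_eq_transpose_of_trivial] using hA.eq
  simpa [sum_sum_sq_eq_trace_mul_transpose, hT, ← sq] using hA.trace_pow_eq_sum_eigenvalues_pow 2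

theorem sum_eigenvalues_sq_pos {A : Matrix n n ℝ} (hA : A.IsHermitian) (h : A ≠ 0) :
    0 < ∑ i, hA.eigenvalues i ^ 2 := by
  obtain ⟨i, hi⟩ := Function.ne_iff.mp (hA.eigenvalues_eq_zero_iff.not.mpr h)
  exact Finset.sum_pos' (fun _ _ => sq_nonneg _) ⟨i, Finset.mem_univ _, pow_two_pos_of_ne_zero hi⟩

end IsHermitian

end Matrix

theorem Fin.exists_eq_and_forall_ne_eq_iff {α : Type*} (f : Fin 3 → α) (b c : α) :
    (∃ i, f i = b ∧ ∀ j ≠ i, f j = c) ↔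
      (f 0 = b ∧ f 1 = c ∧ f 2 = c) ∨ (f 1 = b ∧ f 0 = c ∧ f 2 = c) ∨
        (f 2 = b ∧ f 0 = c ∧ f 1 = c) := by
  simp [Fin.exists_fin_succ, Fin.forall_fin_succ]

theorem eq_or_eq_neg_two_mul_of_power_sums {a x y z : ℝ} (h1 : x + y + z = 0)
    (h2 : x ^ 2 + y ^ 2 + z ^ 2 = 6 * a ^ 2) (h3 : x ^ 3 + y ^ 3 + z ^ 3 = -(6 * a ^ 3)) :
    x = a ∨ x = -(2 * a) := by
  have e2 : x * y + y * z + z * x = -(3 * a ^ 2) := by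
    linear_combination ((x + y + z) / 2) * h1 - h2 / 2
  have e3 : x * y * z = -(2 * a ^ 3) := by
    linear_combination h3 / 3 - ((x ^ 2 + y ^ 2 + z ^ 2 - x * y - y * z - z * x) / 3) * h1
  have hroot : (x - a) ^ 2 * (x + 2 * a) = 0 := by
    linear_combination x ^ 2 * h1 - x * e2 + e3
  rcases mul_eq_zero.mp hroot with h | h
  · exact .inl (sub_eq_zero.mp (pow_eq_zero_iff two_ne_zero |>.mp h))
  · exact .inr (eq_neg_of_add_eq_zero_left h)

theorem power_sum_three_eq_iff {a x y z : ℝ} (h1 : x + y + z = 0)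
    (h2 : x ^ 2 + y ^ 2 + z ^ 2 = 6 * a ^ 2) :
    x ^ 3 + y ^ 3 + z ^ 3 = -(6 * a ^ 3) ↔
      (x = -(2 * a) ∧ y = a ∧ z = a) ∨ (y = -(2 * a) ∧ x = a ∧ z = a) ∨
        (z = -(2 * a) ∧ x = a ∧ y = a) := by
  constructor
  · intro h3
    have hx := eq_or_eq_neg_two_mul_of_power_sums h1 h2 h3
    have hy := eq_or_eq_neg_two_mul_of_power_sums (by linarith) (by linarith) (by linarith)
      (x := y) (y := z) (z := x)
    have hz := eq_or_eq_neg_two_mul_of_power_sums (by linarith) (by linarith) (by linarith)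
      (x := z) (y := x) (z := y)
    -- in the cases with no or several roots `-2a`, `x + y + z = 0` forces `a = 0`
    rcases hx with hx | hx <;> rcases hy with hy | hy <;> rcases hz with hz | hz <;>
      first
      | exact .inl ⟨by linarith, by linarith, by linarith⟩
      | exact .inr (.inl ⟨by linarith, by linarith, by linarith⟩)
      | exact .inr (.inr ⟨by linarith, by linarith, by linarith⟩)
  · rintro (⟨rfl, rfl, rfl⟩ | ⟨rfl, rfl, rfl⟩ | ⟨rfl, rfl, rfl⟩) <;> ring

theorem sum_pow_three_eq_iff {f : Fin 3 → ℝ} {a : ℝ} (h1 : ∑ i, f i = 0)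
    (h2 : ∑ i, f i ^ 2 = 6 * a ^ 2) :
    ∑ i, f i ^ 3 = -(6 * a ^ 3) ↔ ∃ i, f i = -(2 * a) ∧ ∀ j ≠ i, f j = a := by
  rw [Fin.sum_univ_three] at h1 h2 ⊢
  rw [power_sum_three_eq_iff h1 h2, Fin.exists_eq_and_forall_ne_eq_iff]

theorem sqrt_six_mul_div_pow_three_eq_neg_one_iff {s t : ℝ} (hs : 0 < s) :
    √6 * t / s ^ 3 = -1 ↔ t = -(6 * (s * (√6 / 6)) ^ 3) := by
  have h6 : √6 ^ 2 = 6 := Real.sq_sqrt (by norm_num)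
  rw [div_eq_iff (by positivity)]
  constructor <;> intro h
  · linear_combination (√6 / 6) * h + (-t / 6 + s ^ 3 * √6 / 36) * h6
  · linear_combination √6 * h - (s ^ 3 * (√6 ^ 2 + 6) / 36) * h6

/-- β(Q) = -1 iff the eigenvalues of Q/|Q| are √6/6 (double) and -√6/3 (simple). -/
theorem biaxiality_eq_neg_one_iff (Q : Matrix (Fin 3) (Fin 3) ℝ)
    (hQ : Q.IsHermitian) (htr : Q.trace = 0) (hne : Q ≠ 0) :
    Real.sqrt 6 * (Q * Q * Q).trace / (Real.sqrt (∑ k, ∑ l, (Q k l) ^ 2)) ^ 3 = -1 ↔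
      ∃ i : Fin 3,
        hQ.eigenvalues i = -(Real.sqrt (∑ k, ∑ l, (Q k l) ^ 2) * (Real.sqrt 6 / 3)) ∧
        ∀ j : Fin 3, j ≠ i →
          hQ.eigenvalues j = Real.sqrt (∑ k, ∑ l, (Q k l) ^ 2) * (Real.sqrt 6 / 6) := by
  set s := √(∑ k, ∑ l, Q k l ^ 2)
  have hsum : ∑ i, hQ.eigenvalues i = 0 := by simpa [hQ.trace_eq_sum_eigenvalues] using htr
  have hs : 0 < s :=
    Real.sqrt_pos.2 (hQ.sum_sum_sq_eq_sum_eigenvalues_sq ▸ hQ.sum_eigenvalues_sq_pos hne)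
  have hsq : ∑ i, hQ.eigenvalues i ^ 2 = 6 * (s * (√6 / 6)) ^ 2 := by
    rw [mul_pow, div_pow, Real.sq_sqrt (show (0 : ℝ) ≤ 6 by norm_num),
      Real.sq_sqrt (by positivity), hQ.sum_sum_sq_eq_sum_eigenvalues_sq]
    ring
  have htr3 : (Q * Q * Q).trace = ∑ i, hQ.eigenvalues i ^ 3 := by
    simpa [← pow_three'] using hQ.trace_pow_eq_sum_eigenvalues_pow 3
  rw [htr3, sqrt_six_mul_div_pow_three_eq_neg_one_iff hs, sum_pow_three_eq_iff hsum hsq,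
    show s * (√6 / 3) = 2 * (s * (√6 / 6)) by ring]
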